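/- arXiv:1602.08632 — 11 statements merged into one kernel-verified Lean document; each statement's English description precedes it below -/
import Mathlib

section
/- If |a| < 1 and |b| < 1, then for every initial condition (x_0, y_0), the orbit (x_k, y_k) of the Zeraoulia–Sprott map satisfies x_k → 0 and y_k → 0 as k → ∞; i.e., the origin is globally asymptotically stable. -/
open Filter Topology

noncomputable def orbit (a b : ℝ) (p : ℝ × ℝ) : ℕ → ℝ × ℝ
  | 0 => p
  | k + 1 =>
    let q := orbit a b p k
    (-a * q.1 / (1 + q.2 ^ 2), q.1 + b * q.2)

/-!
The function `V(x, y) = c |x| + |y|` is a Lyapunov function: since `1 + y² ≥ 1`, one step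
gives `|x'| ≤ |a| |x|` and `|y'| ≤ |x| + |b| |y|`, so `V' ≤ (1 + c |a|) |x| + |b| |y|`, and for
`c = 2 / (1 - |a|)` and `ρ = max |b| ((1 + |a|) / 2) < 1` this is at most `ρ V`. Hence `V`, and
with it both coordinates, decays geometrically.
-/

theorem tendsto_zero_of_le_mul_of_lt_one {u : ℕ → ℝ} {ρ : ℝ} (hu : ∀ n, 0 ≤ u n)
    (hρ₀ : 0 ≤ ρ) (hρ₁ : ρ < 1) (h : ∀ n, u (n + 1) ≤ ρ * u n) :
    Tendsto u atTop (𝓝 0) := by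
  have hgeom : Tendsto (fun n => ρ ^ n * u 0) atTop (𝓝 0) := by
    simpa using (tendsto_pow_atTop_nhds_zero_of_lt_one hρ₀ hρ₁).mul_const (u 0)
  exact squeeze_zero hu (fun n => le_geom hρ₀ n fun k _ => h k) hgeom

section orbit

variable {a b : ℝ} {p : ℝ × ℝ}

theorem abs_fst_orbit_succ_le (k : ℕ) :
    |(orbit a b p (k + 1)).1| ≤ |a| * |(orbit a b p k).1| := by
  set x := (orbit a b p k).1
  set y := (orbit a b p k).2
  change |-a * x / (1 + y ^ 2)| ≤ |a| * |x|
  have hden : 1 ≤ 1 + y ^ 2 := le_add_of_nonneg_right (sq_nonneg y)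
  rw [abs_div, abs_of_pos (zero_lt_one.trans_le hden), abs_mul, abs_neg]
  exact div_le_self (by positivity) hden

theorem abs_snd_orbit_succ_le (k : ℕ) :
    |(orbit a b p (k + 1)).2| ≤ |(orbit a b p k).1| + |b| * |(orbit a b p k).2| :=
  (abs_add_le _ _).trans_eq (by rw [abs_mul])

theorem weighted_abs_orbit_succ_le {c ρ : ℝ} (hc : 0 ≤ c) (hbρ : |b| ≤ ρ)
    (hcρ : 1 + c * |a| ≤ c * ρ) (k : ℕ) :
    c * |(orbit a b p (k + 1)).1| + |(orbit a b p (k + 1)).2| ≤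
      ρ * (c * |(orbit a b p k).1| + |(orbit a b p k).2|) := by
  calc c * |(orbit a b p (k + 1)).1| + |(orbit a b p (k + 1)).2|
      ≤ c * (|a| * |(orbit a b p k).1|) + (|(orbit a b p k).1| + |b| * |(orbit a b p k).2|) :=
        add_le_add (mul_le_mul_of_nonneg_left (abs_fst_orbit_succ_le k) hc)
          (abs_snd_orbit_succ_le k)
    _ = (1 + c * |a|) * |(orbit a b p k).1| + |b| * |(orbit a b p k).2| := by ring
    _ ≤ c * ρ * |(orbit a b p k).1| + ρ * |(orbit a b p k).2| := by gcongr
    _ = ρ * (c * |(orbit a b p k).1| + |(orbit a b p k).2|) := by ring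

end orbit

theorem exists_lyapunov_weight {a b : ℝ} (ha : |a| < 1) (hb : |b| < 1) :
    ∃ c ρ : ℝ, 0 < c ∧ ρ < 1 ∧ |b| ≤ ρ ∧ 1 + c * |a| ≤ c * ρ := by
  have h1a : 0 < 1 - |a| := sub_pos.mpr ha
  refine ⟨2 / (1 - |a|), max |b| ((1 + |a|) / 2), by positivity,
    max_lt hb (by linarith), le_max_left _ _, ?_⟩
  calc 1 + 2 / (1 - |a|) * |a| = 2 / (1 - |a|) * ((1 + |a|) / 2) := by field_simp; ring
    _ ≤ 2 / (1 - |a|) * max |b| ((1 + |a|) / 2) := by gcongr; exact le_max_right _ _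

theorem stmt1 (a b : ℝ) (ha : |a| < 1) (hb : |b| < 1) (x₀ y₀ : ℝ) :
    Tendsto (fun k => (orbit a b (x₀, y₀) k).1) atTop (𝓝 0) ∧
    Tendsto (fun k => (orbit a b (x₀, y₀) k).2) atTop (𝓝 0) := by
  obtain ⟨c, ρ, hc, hρ, hbρ, hcρ⟩ := exists_lyapunov_weight ha hb
  set x := fun k => (orbit a b (x₀, y₀) k).1
  set y := fun k => (orbit a b (x₀, y₀) k).2
  have hV : Tendsto (fun k => c * |x k| + |y k|) atTop (𝓝 0) :=
    tendsto_zero_of_le_mul_of_lt_one (fun k => by positivity) ((abs_nonneg b).trans hbρ) hρ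
      (weighted_abs_orbit_succ_le hc.le hbρ hcρ)
  refine ⟨squeeze_zero_norm (fun k => ?_) (by simpa using hV.div_const c),
    squeeze_zero_norm (fun k => ?_) hV⟩
  · rw [Real.norm_eq_abs, le_div_iff₀ hc]
    linarith [abs_nonneg (y k)]
  · rw [Real.norm_eq_abs]
    linarith [mul_nonneg hc.le (abs_nonneg (x k))]
end

section
/- If |a| < 1 and |b| < 1 with max(|a|,|b|) < δ < 1, then |y_{k+1}| ≤ |b|^{k+1} |y_0| + (k+1) δ^k |x_0| for all k ≥ 0. -/
open Filter Topology

lemma orbit_x_bound (a b x₀ y₀ : ℝ) :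
    ∀ k, |(orbit a b (x₀, y₀) k).1| ≤ |a| ^ k * |x₀| := by
  intro k
  induction k with
  | zero => simp [orbit]
  | succ n ih =>
    set q := orbit a b (x₀, y₀) n with hq
    have h1 : (0:ℝ) < 1 + q.2 ^ 2 := by positivity
    have key : |(orbit a b (x₀, y₀) (n+1)).1| = |a| * |q.1| / (1 + q.2 ^ 2) := by
      simp only [orbit, ← hq]
      rw [abs_div, abs_mul, abs_neg, abs_of_pos h1]
    rw [key]
    calc |a| * |q.1| / (1 + q.2 ^ 2) ≤ |a| * |q.1| / 1 := by
          apply div_le_div_of_nonneg_left (by positivity) one_pos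
          linarith [sq_nonneg q.2]
      _ = |a| * |q.1| := by ring
      _ ≤ |a| * (|a| ^ n * |x₀|) := by
          exact mul_le_mul_of_nonneg_left ih (abs_nonneg a)
      _ = |a| ^ (n + 1) * |x₀| := by ring

theorem stmt3 (a b δ : ℝ) (ha : |a| < 1) (hb : |b| < 1)
    (hδ : max |a| |b| < δ) (hδ1 : δ < 1) (x₀ y₀ : ℝ) :
    ∀ k : ℕ, |(orbit a b (x₀, y₀) (k + 1)).2| ≤
      |b| ^ (k + 1) * |y₀| + (k + 1) * δ ^ k * |x₀| := by
  have haδ : |a| ≤ δ := le_of_lt (lt_of_le_of_lt (le_max_left _ _) hδ)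
  have hbδ : |b| ≤ δ := le_of_lt (lt_of_le_of_lt (le_max_right _ _) hδ)
  have hδ0 : 0 ≤ δ := le_trans (abs_nonneg a) haδ
  have hx : ∀ k, |(orbit a b (x₀, y₀) k).1| ≤ δ ^ k * |x₀| := by
    intro k
    calc |(orbit a b (x₀, y₀) k).1| ≤ |a| ^ k * |x₀| := orbit_x_bound a b x₀ y₀ k
      _ ≤ δ ^ k * |x₀| :=
        mul_le_mul_of_nonneg_right (pow_le_pow_left₀ (abs_nonneg a) haδ k) (abs_nonneg x₀)
  intro k
  induction k with
  | zero =>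
    have h : (orbit a b (x₀, y₀) 1).2 = x₀ + b * y₀ := by simp [orbit]
    rw [h]
    have h0 : |x₀ + b * y₀| ≤ |x₀| + |b| * |y₀| :=
      (abs_add_le _ _).trans (by rw [abs_mul])
    push_cast
    simp only [pow_one, pow_zero]
    linarith
  | succ n ih =>
    have h : (orbit a b (x₀, y₀) (n+2)).2
        = (orbit a b (x₀, y₀) (n+1)).1 + b * (orbit a b (x₀, y₀) (n+1)).2 := by
      simp [orbit]
    rw [h]
    have h1 := hx (n+1)
    have h2 : |b| * |(orbit a b (x₀, y₀) (n+1)).2|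
        ≤ |b| * (|b| ^ (n + 1) * |y₀| + (n + 1) * δ ^ n * |x₀|) :=
      mul_le_mul_of_nonneg_left ih (abs_nonneg b)
    have habs : |(orbit a b (x₀, y₀) (n+1)).1 + b * (orbit a b (x₀, y₀) (n+1)).2|
        ≤ |(orbit a b (x₀, y₀) (n+1)).1| + |b| * |(orbit a b (x₀, y₀) (n+1)).2| := by
      exact (abs_add_le _ _).trans (by rw [abs_mul])
    have hbδn : |b| * ((n + 1) * δ ^ n) ≤ δ ^ (n+1) * (n + 1) := by
      have : |b| * δ ^ n ≤ δ * δ ^ n :=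
        mul_le_mul_of_nonneg_right hbδ (pow_nonneg hδ0 n)
      calc |b| * ((n + 1) * δ ^ n) = (|b| * δ ^ n) * (n + 1) := by ring
        _ ≤ (δ * δ ^ n) * (n + 1) := by
            apply mul_le_mul_of_nonneg_right this; positivity
        _ = δ ^ (n+1) * (n + 1) := by rw [pow_succ']
    have key : |(orbit a b (x₀, y₀) (n+1)).1|
        + |b| * (|b| ^ (n + 1) * |y₀| + (n + 1) * δ ^ n * |x₀|)
        ≤ |b| ^ (n + 1 + 1) * |y₀| + (n + 1 + 1) * δ ^ (n+1) * |x₀| := by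
      have e1 : |b| * (|b| ^ (n + 1) * |y₀| + (n + 1) * δ ^ n * |x₀|)
          = |b| ^ (n+2) * |y₀| + (|b| * ((n+1) * δ ^ n)) * |x₀| := by ring
      rw [e1]
      have e2 : (|b| * ((n+1) * δ ^ n)) * |x₀| ≤ (δ ^ (n+1) * (n+1)) * |x₀| :=
        mul_le_mul_of_nonneg_right hbδn (abs_nonneg x₀)
      have e3 := h1
      push_cast
      nlinarith [abs_nonneg x₀]
    push_cast at key ⊢
    linarith [habs, h2]
end

section
/- If |a| < δ < 1 < |b| and |y_0| ≥ |x_0|/(|b| - 1), then |y_{k+1}| ≥ |b|^{k+1} (|y_0| - |x_0|/(|b|-1)) for all k, and if moreover |y_0| > |x_0|/(|b|-1) then |y_k| → ∞ as k → ∞. -/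
open Filter Topology

theorem stmt4 (a b δ : ℝ) (ha : |a| < δ) (hδ : δ < 1) (hb : 1 < |b|)
    (x₀ y₀ : ℝ) (hy : |y₀| ≥ |x₀| / (|b| - 1)) :
    (∀ k : ℕ, |(orbit a b (x₀, y₀) (k + 1)).2| ≥
        |b| ^ (k + 1) * (|y₀| - |x₀| / (|b| - 1))) ∧
    (|y₀| > |x₀| / (|b| - 1) →
      Tendsto (fun k => |(orbit a b (x₀, y₀) k).2|) atTop atTop) := by
  have hb1 : (0:ℝ) < |b| - 1 := by linarith
  set c : ℝ := |x₀| / (|b| - 1) with hc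
  have hc0 : 0 ≤ c := div_nonneg (abs_nonneg _) hb1.le
  have hcx : c * (|b| - 1) = |x₀| := div_mul_cancel₀ _ (ne_of_gt hb1)
  have ha1 : |a| < 1 := lt_trans ha hδ
  -- |x_k| ≤ |x₀|
  have hx : ∀ k, |(orbit a b (x₀, y₀) k).1| ≤ |x₀| := by
    intro k
    induction k with
    | zero => simp [orbit]
    | succ k ih =>
      set q := orbit a b (x₀, y₀) k with hq
      have hd : (1:ℝ) ≤ 1 + q.2 ^ 2 := by nlinarith [sq_nonneg q.2]
      have hd0 : (0:ℝ) < 1 + q.2 ^ 2 := by linarith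
      have h1 : |(orbit a b (x₀, y₀) (k+1)).1| = |a| * |q.1| / (1 + q.2 ^ 2) := by
        show |(-a * q.1 / (1 + q.2 ^ 2))| = _
        rw [abs_div, abs_mul, abs_neg, abs_of_pos hd0]
      rw [h1]
      have h2 : |a| * |q.1| / (1 + q.2 ^ 2) ≤ |a| * |q.1| :=
        div_le_self (mul_nonneg (abs_nonneg _) (abs_nonneg _)) hd
      have h3 : |a| * |q.1| ≤ |q.1| := by
        nlinarith [abs_nonneg q.1, abs_nonneg a]
      linarith
  -- |y_k| ≥ |b|^k (|y₀| - c) + c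
  have hykey : ∀ k, |b| ^ k * (|y₀| - c) + c ≤ |(orbit a b (x₀, y₀) k).2| := by
    intro k
    induction k with
    | zero => simp [orbit]
    | succ k ih =>
      set q := orbit a b (x₀, y₀) k with hq
      have hlow : |b| * |q.2| - |q.1| ≤ |(orbit a b (x₀, y₀) (k+1)).2| := by
        show |b| * |q.2| - |q.1| ≤ |q.1 + b * q.2|
        have h := abs_add_le (q.1 + b * q.2) (-q.1)
        have he : q.1 + b * q.2 + -q.1 = b * q.2 := by ring
        rw [he, abs_neg, abs_mul] at h
        linarith
      have hxk := hx k
      have hbpos : (0:ℝ) < |b| := by linarith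
      have hpow : (0:ℝ) < |b| ^ k := pow_pos hbpos k
      have : |b| ^ (k+1) * (|y₀| - c) + c ≤ |b| * |q.2| - |q.1| := by
        have h5 : |b| * (|b| ^ k * (|y₀| - c) + c) ≤ |b| * |q.2| :=
          mul_le_mul_of_nonneg_left ih hbpos.le
        have : |q.1| ≤ |x₀| := hxk
        rw [pow_succ, mul_comm (|b| ^ k) (|b|), mul_assoc]
        nlinarith [h5]
      linarith
  constructor
  · intro k
    have := hykey (k + 1)
    have : |b| ^ (k+1) * (|y₀| - c) ≤ |(orbit a b (x₀, y₀) (k+1)).2| := by linarith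
    exact this
  · intro hygt
    have hpos : 0 < |y₀| - c := by linarith
    have htend : Tendsto (fun k : ℕ => |b| ^ k * (|y₀| - c)) atTop atTop :=
      (tendsto_pow_atTop_atTop_of_one_lt hb).atTop_mul_const hpos
    refine tendsto_atTop_mono (fun k => ?_) htend
    have := hykey k
    linarith
end

section
/- Let |a| > 1, |b| < 1, 0 < δ < 1, and R_y = sqrt(|a| - 1 + δ|a|). If |y_0| > R_y, then |x_1| ≤ |x_0|/(1+δ), with strict inequality |x_1| < |x_0|/(1+δ) when x_0 ≠ 0. -/
open Filter Topology

theorem stmt6 (a b δ : ℝ) (ha : 1 < |a|) (hb : |b| < 1)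
    (hδ0 : 0 < δ) (hδ1 : δ < 1) (x₀ y₀ : ℝ)
    (hy : |y₀| > Real.sqrt (|a| - 1 + δ * |a|)) :
    |(-a * x₀ / (1 + y₀ ^ 2))| ≤ |x₀| / (1 + δ) ∧
    (x₀ ≠ 0 → |(-a * x₀ / (1 + y₀ ^ 2))| < |x₀| / (1 + δ)) := by
  have ha0 : (0:ℝ) < |a| := lt_trans one_pos ha
  have hv : (0:ℝ) ≤ |a| - 1 + δ * |a| := by nlinarith
  have hy2 : |a| - 1 + δ * |a| < y₀ ^ 2 := by
    have h1 : Real.sqrt (|a| - 1 + δ * |a|) ^ 2 < |y₀| ^ 2 := by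
      apply pow_lt_pow_left₀ hy (Real.sqrt_nonneg _) (by norm_num)
    rwa [Real.sq_sqrt hv, sq_abs] at h1
  have hd : |a| * (1 + δ) < 1 + y₀ ^ 2 := by nlinarith
  have hden : (0:ℝ) < 1 + y₀ ^ 2 := by positivity
  have hδp : (0:ℝ) < 1 + δ := by linarith
  have habs : |(-a * x₀ / (1 + y₀ ^ 2))| = |a| * |x₀| / (1 + y₀ ^ 2) := by
    rw [abs_div, abs_mul, abs_neg, abs_of_pos hden]
  constructor
  · rw [habs, div_le_div_iff₀ hden hδp]
    nlinarith [abs_nonneg x₀]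
  · intro hx
    have hx0 : 0 < |x₀| := abs_pos.mpr hx
    rw [habs, div_lt_div_iff₀ hden hδp]
    nlinarith
end

section
/- Let |a| > 1, |b| < 1, 0 < δ < 1, R_y = sqrt(|a| - 1 + δ|a|), R_x = |b| R_y + sqrt(a² - 1 + δ a²). If |y_0| ≤ R_y and |x_0| > R_x, then |x_2| ≤ |x_0|/(1+δ) < |x_0|, where x_2 is the first coordinate after two iterations of the map. -/
open Filter Topology

theorem stmt8 (a b δ : ℝ) (ha : 1 < |a|) (hb : |b| < 1)
    (hδ0 : 0 < δ) (hδ1 : δ < 1) (x₀ y₀ : ℝ)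
    (hy : |y₀| ≤ Real.sqrt (|a| - 1 + δ * |a|))
    (hx : |x₀| > |b| * Real.sqrt (|a| - 1 + δ * |a|) +
      Real.sqrt (a ^ 2 - 1 + δ * a ^ 2)) :
    |(orbit a b (x₀, y₀) 2).1| ≤ |x₀| / (1 + δ) ∧ |x₀| / (1 + δ) < |x₀| := by
  have hRy0 : (0:ℝ) ≤ Real.sqrt (|a| - 1 + δ * |a|) := Real.sqrt_nonneg _
  have hx0pos : 0 < |x₀| := lt_of_le_of_lt (by positivity) hx
  refine ⟨?_, div_lt_self hx0pos (by linarith)⟩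
  have hs : (0:ℝ) ≤ a ^ 2 - 1 + δ * a ^ 2 := by nlinarith [sq_abs a, hδ0.le]
  set y₁ := x₀ + b * y₀ with hy1def
  have h1 : Real.sqrt (a ^ 2 - 1 + δ * a ^ 2) ≤ |y₁| := by
    have h2 : |x₀| ≤ |y₁| + |b * y₀| := by
      have : x₀ = y₁ - b * y₀ := by ring
      rw [this]
      exact abs_sub _ _
    have hby : |b * y₀| ≤ |b| * Real.sqrt (|a| - 1 + δ * |a|) := by
      rw [abs_mul]; exact mul_le_mul_of_nonneg_left hy (abs_nonneg b)
    linarith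
  have hy1sq : a ^ 2 - 1 + δ * a ^ 2 ≤ y₁ ^ 2 := by
    nlinarith [Real.sq_sqrt hs, sq_abs y₁, Real.sqrt_nonneg (a ^ 2 - 1 + δ * a ^ 2)]
  have hd0 : (0:ℝ) < 1 + y₀ ^ 2 := by positivity
  have hd1 : (0:ℝ) < 1 + y₁ ^ 2 := by positivity
  have hx2 : (orbit a b (x₀, y₀) 2).1 = a ^ 2 * x₀ / ((1 + y₀ ^ 2) * (1 + y₁ ^ 2)) := by
    show -a * (-a * x₀ / (1 + y₀ ^ 2)) / (1 + (x₀ + b * y₀) ^ 2) = _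
    rw [← hy1def]
    field_simp
  rw [hx2, abs_div, abs_mul]
  rw [abs_of_pos (by positivity : (0:ℝ) < (1 + y₀ ^ 2) * (1 + y₁ ^ 2))]
  rw [div_le_div_iff₀ (by positivity) (by positivity)]
  have ha2 : |a ^ 2| = a ^ 2 := abs_of_nonneg (by positivity)
  rw [ha2]
  nlinarith [hx0pos.le, sq_nonneg y₀, sq_nonneg a, mul_nonneg (sq_nonneg y₀) hx0pos.le,
    mul_nonneg (sq_nonneg y₀) (mul_nonneg hs hx0pos.le), mul_nonneg hs hx0pos.le,
    mul_nonneg (mul_nonneg (sq_nonneg y₀) hδ0.le) hx0pos.le]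
end

section
/- Let |a| > 1, |b| < 1, 0 < δ < 1, and R_x = |b| sqrt(|a| - 1 + δ|a|) + sqrt(a² - 1 + δ a²). Then for every initial condition (x_0, y_0), there exists n ∈ ℕ such that |x_n| ≤ R_x. -/
open Filter Topology

theorem stmt9 (a b δ : ℝ) (ha : 1 < |a|) (hb : |b| < 1)
    (hδ0 : 0 < δ) (hδ1 : δ < 1) (x₀ y₀ : ℝ) :
    ∃ n : ℕ, |(orbit a b (x₀, y₀) n).1| ≤
      |b| * Real.sqrt (|a| - 1 + δ * |a|) +
        Real.sqrt (a ^ 2 - 1 + δ * a ^ 2) := by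
  by_contra hcontra
  push_neg at hcontra
  set x : ℕ → ℝ := fun n => (orbit a b (x₀, y₀) n).1 with hxdef
  set y : ℕ → ℝ := fun n => (orbit a b (x₀, y₀) n).2 with hydef
  set T : ℝ := |a| - 1 + δ * |a| with hTdef
  set S : ℝ := a ^ 2 - 1 + δ * a ^ 2 with hSdef
  set R : ℝ := |b| * Real.sqrt T + Real.sqrt S with hRdef
  have hcon : ∀ n, R < |x n| := hcontra
  have ha0 : 0 < |a| := lt_trans one_pos ha
  have hT : 0 < T := by
    have : 0 < δ * |a| := mul_pos hδ0 ha0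
    rw [hTdef]; linarith
  have hS : 0 < S := by
    have h1 : 1 < a ^ 2 := by nlinarith [sq_abs a]
    have : 0 < δ * a ^ 2 := by positivity
    rw [hSdef]; linarith
  have hs : 0 < Real.sqrt S := Real.sqrt_pos.mpr hS
  have hRpos : 0 < R :=
    add_pos_of_nonneg_of_pos (by positivity) hs
  have hx : ∀ n, x (n + 1) = -a * x n / (1 + (y n) ^ 2) := fun n => rfl
  have hy : ∀ n, y (n + 1) = x n + b * y n := fun n => rfl
  have hyden : ∀ n, 0 < 1 + (y n) ^ 2 := fun n => by positivity
  have habs : ∀ n, |x (n + 1)| = |a| * |x n| / (1 + (y n) ^ 2) := by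
    intro n
    rw [hx n, abs_div, abs_of_pos (hyden n), abs_mul, abs_neg]
  have key : ∀ k, ∃ m, k < m ∧ |x m| ≤ |x k| / (1 + δ) := by
    intro k
    by_cases hcase : T ≤ (y k) ^ 2
    · refine ⟨k + 1, Nat.lt_succ_self k, ?_⟩
      rw [habs k]
      have h1 : |a| * (1 + δ) ≤ 1 + (y k) ^ 2 := by
        have he : |a| * (1 + δ) = 1 + T := by rw [hTdef]; ring
        linarith
      calc |a| * |x k| / (1 + (y k) ^ 2) ≤ |a| * |x k| / (|a| * (1 + δ)) := by
            apply div_le_div_of_nonneg_left (by positivity) (by positivity) h1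
        _ = |x k| / (1 + δ) := mul_div_mul_left _ _ (ne_of_gt ha0)
    · push_neg at hcase
      refine ⟨k + 2, by omega, ?_⟩
      have hyk : |y k| ≤ Real.sqrt T := by
        rw [← Real.sqrt_sq_eq_abs]
        exact Real.sqrt_le_sqrt hcase.le
      have hxk : R < |x k| := hcon k
      have hy1 : |x k| - |b| * Real.sqrt T ≤ |y (k + 1)| := by
        rw [hy k]
        have h2 : |b * y k| ≤ |b| * Real.sqrt T := by
          rw [abs_mul]; exact mul_le_mul_of_nonneg_left hyk (abs_nonneg b)
        have h3 := abs_sub_abs_le_abs_sub (x k) (-(b * y k))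
        rw [abs_neg, sub_neg_eq_add] at h3
        linarith
      have hgap : Real.sqrt S < |x k| - |b| * Real.sqrt T := by
        rw [hRdef] at hxk; linarith
      have h0 : 0 ≤ |x k| - |b| * Real.sqrt T := le_trans hs.le hgap.le
      have hy2 : S < (y (k + 1)) ^ 2 := by
        have h4 : (|x k| - |b| * Real.sqrt T) ^ 2 ≤ (y (k + 1)) ^ 2 := by
          rw [← sq_abs (y (k + 1))]
          exact pow_le_pow_left₀ h0 hy1 2
        have h5 : S < (|x k| - |b| * Real.sqrt T) ^ 2 := by
          have hsq : Real.sqrt S ^ 2 = S := Real.sq_sqrt hS.le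
          nlinarith
        linarith
      have hA : |x (k + 1)| ≤ |a| * |x k| := by
        rw [habs k]
        exact div_le_self (by positivity) (by nlinarith [sq_nonneg (y k)])
      have hden : (1 + δ) * a ^ 2 < 1 + (y (k + 1)) ^ 2 := by
        have he : (1 + δ) * a ^ 2 = 1 + S := by rw [hSdef]; ring
        linarith
      rw [habs (k + 1)]
      have hane : a ≠ 0 := by
        intro h; rw [h, abs_zero] at ha; linarith
      have ha2 : 0 < (1 + δ) * a ^ 2 := by positivity
      calc |a| * |x (k + 1)| / (1 + (y (k + 1)) ^ 2)
          ≤ |a| * (|a| * |x k|) / ((1 + δ) * a ^ 2) := by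
            gcongr
        _ = |x k| / (1 + δ) := by
            rw [div_eq_div_iff (ne_of_gt ha2) (by positivity)]
            linear_combination ((1 + δ) * |x k|) * abs_mul_abs_self a
  have iter : ∀ i : ℕ, ∃ m, |x m| ≤ |x 0| / (1 + δ) ^ i := by
    intro i
    induction i with
    | zero => exact ⟨0, by simp⟩
    | succ i ih =>
      obtain ⟨m, hm⟩ := ih
      obtain ⟨m', _, hm'⟩ := key m
      refine ⟨m', ?_⟩
      calc |x m'| ≤ |x m| / (1 + δ) := hm'
        _ ≤ (|x 0| / (1 + δ) ^ i) / (1 + δ) :=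
            (div_le_div_iff_of_pos_right (by linarith)).mpr hm
        _ = |x 0| / (1 + δ) ^ (i + 1) := by rw [div_div, ← pow_succ]
  obtain ⟨i, hi⟩ := pow_unbounded_of_one_lt (|x 0| / R) (by linarith : (1:ℝ) < 1 + δ)
  obtain ⟨m, hm⟩ := iter i
  have hlt : |x 0| / (1 + δ) ^ i < R := by
    rw [div_lt_iff₀ hRpos] at hi
    rw [div_lt_iff₀ (by positivity)]
    linarith
  exact absurd (hcon m) (not_lt.mpr (le_of_lt (lt_of_le_of_lt hm hlt)))
end

section
/- Let |a| > 1, |b| < 1, 0 < δ < 1, and R_x = |b| sqrt(|a| - 1 + δ|a|) + sqrt(a² - 1 + δ a²). If |x_0| ≤ R_x, then |x_m| ≤ a² R_x for all m ≥ 0. -/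
open Filter Topology

-- auxiliary core inequality
set_option maxHeartbeats 1600000 in
lemma coreIneq (A B e g s R t : ℝ) (hA : 1 < A) (hB0 : 0 ≤ B) (hB1 : B ≤ 1)
    (he0 : 0 ≤ e) (he2 : e ^ 2 = A - 1) (hg0 : 0 ≤ g) (hg2 : g ^ 2 = A + 1)
    (hs0 : 0 ≤ s) (hse : s ≤ e) (hR : e * (B + g) ≤ R)
    (ht1 : R * (1 + s ^ 2) ≤ t) (ht2 : t ≤ A * R) :
    A * t ≤ R * (1 + s ^ 2) * (1 + (t - B * s) ^ 2) := by
  set K := R * (1 + s ^ 2) with hKdef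
  have hg1 : 1 ≤ g := by nlinarith
  have he0' : 0 < e := by nlinarith
  have hR0 : 0 < R := by nlinarith
  have hK0 : 0 < K := by
    have : (0:ℝ) < 1 + s ^ 2 := by positivity
    exact mul_pos hR0 this
  have hKR : R ≤ K := by nlinarith [sq_nonneg s]
  have hKt : K ≤ A * R := le_trans ht1 ht2
  have hBse : B * s ≤ B * e := mul_le_mul_of_nonneg_left hse hB0
  have hegK : e * g ≤ K - B * s := by nlinarith [sq_nonneg s]
  have heg0 : 0 < e * g := by positivity
  have htBs : e * g ≤ t - B * s := le_trans hegK (by linarith)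
  have heg2 : e ^ 2 * g ^ 2 = (A - 1) * (A + 1) := by rw [he2, hg2]
  have heg2B : e ^ 2 * g ^ 2 * B ^ 2 = (A - 1) * (A + 1) * B ^ 2 := by rw [he2, hg2]
  have hegB : e ^ 2 * (g * B) = (A - 1) * (g * B) := by rw [he2]
  rcases le_or_gt A (2 * K * (K - B * s)) with h1 | h1
  · -- increasing branch: q(t) ≥ q(K) ≥ 0
    have hp1 : A ≤ K * (t + K - 2 * (B * s)) := by
      nlinarith [mul_nonneg hK0.le (sub_nonneg.2 ht1)]
    have hp2 : A - 1 ≤ (K - B * s) ^ 2 := by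
      nlinarith [pow_le_pow_left₀ heg0.le hegK 2]
    nlinarith [mul_nonneg (sub_nonneg.2 ht1) (sub_nonneg.2 hp1),
      mul_nonneg hK0.le (sub_nonneg.2 hp2)]
  rcases le_or_gt (2 * K * (A * R - B * s)) A with h2 | h2
  · -- decreasing branch: q(t) ≥ q(A*R) ≥ 0
    have hRsq : (e * (B + g)) ^ 2 ≤ R ^ 2 := by
      apply pow_le_pow_left₀ (by positivity) hR
    have hq : g ^ 2 * (1 + B ^ 2) ≤ A ^ 2 * (B + g) ^ 2 := by
      nlinarith [mul_nonneg (sq_nonneg B) (by nlinarith : (0:ℝ) ≤ A ^ 2 - A),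
        mul_nonneg (mul_nonneg hB0 hg0) (by nlinarith : (0:ℝ) ≤ A ^ 2 - 1),
        mul_nonneg hB0 (sub_nonneg.2 hg1), mul_nonneg hB0 (sub_nonneg.2 hB1),
        mul_nonneg (by linarith : (0:ℝ) ≤ A + 1) (by nlinarith : (0:ℝ) ≤ A ^ 2 - 1)]
    have hkey : (A ^ 2 - 1) * (1 + B ^ 2) ≤ A ^ 2 * R ^ 2 := by
      nlinarith [mul_le_mul_of_nonneg_left hRsq (sq_nonneg A),
        mul_le_mul_of_nonneg_left hq (sq_nonneg e), heg2, heg2B]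
    have h6 : A ^ 2 - 1 ≤ s ^ 2 + (A * R - B * s) ^ 2 := by
      nlinarith [sq_nonneg ((1 + B ^ 2) * s - A * R * B), hkey, sq_nonneg (B * s), sq_nonneg B]
    have hq2 : A * (A * R) ≤ K * (1 + (A * R - B * s) ^ 2) := by
      nlinarith [mul_le_mul_of_nonneg_left h6 hR0.le,
        mul_nonneg (mul_nonneg hR0.le (sq_nonneg s)) (sq_nonneg (A * R - B * s))]
    have hp3 : K * (A * R + t - 2 * (B * s)) ≤ A := by
      nlinarith [mul_nonneg hK0.le (sub_nonneg.2 ht2)]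
    nlinarith [mul_nonneg (sub_nonneg.2 ht2) (sub_nonneg.2 hp3), hq2]
  · -- interior: complete the square
    have d1 : 2 * K * (e * g) ≤ A := by nlinarith
    have hsR : s * (B + g) ≤ R := le_trans (by nlinarith) hR
    have hA2 : A ^ 2 * (B + g) + A * B ≤ 2 * (B + g) := by
      have hcon : 2 * (A - 1) * (A + 1 + B * g) ≤ A := by
        nlinarith [mul_le_mul_of_nonneg_right (le_trans hR hKR) (by positivity : (0:ℝ) ≤ 2 * (e * g)),
          heg2, hegB, d1]
      nlinarith [sq_nonneg (g - 1), sq_nonneg (A - 1), mul_nonneg hB0 (sub_nonneg.2 hg1)]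
    have hW : A ^ 2 + 4 * K * A * (B * s) ≤ 4 * K ^ 2 := by
      -- 2K ≥ 2R ≥ A²R + ABs, then multiply by 2K and use A ≤ 2K(AR - Bs) → A² ≤ 2KA²R - 2KABs
      have hstep : A ^ 2 * R + A * (B * s) ≤ 2 * R := by
        have hBg0 : (0:ℝ) < B + g := by linarith
        nlinarith [mul_le_mul_of_nonneg_left hsR (mul_nonneg (by positivity : (0:ℝ) ≤ A) hB0)]
      nlinarith [mul_le_mul_of_nonneg_left hstep (by positivity : (0:ℝ) ≤ 2 * K),
        mul_le_mul_of_nonneg_left h2.le (by positivity : (0:ℝ) ≤ A), hKR, hK0]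
    have h5 : 0 ≤ 4 * K * (K * (1 + (t - B * s) ^ 2) - A * t) := by
      nlinarith [sq_nonneg (2 * K * (t - B * s) - A)]
    nlinarith [h5, hK0, mul_pos hK0 hK0]

set_option maxHeartbeats 1600000 in
theorem stmt10 (a b δ : ℝ) (ha : 1 < |a|) (hb : |b| < 1)
    (hδ0 : 0 < δ) (hδ1 : δ < 1) (x₀ y₀ : ℝ)
    (hx : |x₀| ≤ |b| * Real.sqrt (|a| - 1 + δ * |a|) +
      Real.sqrt (a ^ 2 - 1 + δ * a ^ 2)) :
    ∀ m : ℕ, |(orbit a b (x₀, y₀) m).1| ≤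
      a ^ 2 * (|b| * Real.sqrt (|a| - 1 + δ * |a|) +
        Real.sqrt (a ^ 2 - 1 + δ * a ^ 2)) := by
  set R := |b| * Real.sqrt (|a| - 1 + δ * |a|) + Real.sqrt (a ^ 2 - 1 + δ * a ^ 2) with hRdef
  set e := Real.sqrt (|a| - 1) with hedef
  set g := Real.sqrt (|a| + 1) with hgdef
  have ha0 : (0:ℝ) < |a| := by positivity
  have hA1 : (0:ℝ) < |a| - 1 := by linarith
  have he0 : 0 ≤ e := Real.sqrt_nonneg _
  have hg0 : 0 ≤ g := Real.sqrt_nonneg _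
  have he2 : e ^ 2 = |a| - 1 := Real.sq_sqrt hA1.le
  have hg2 : g ^ 2 = |a| + 1 := Real.sq_sqrt (by linarith)
  have hB0 : 0 ≤ |b| := abs_nonneg b
  have hB1 : |b| ≤ 1 := hb.le
  have hc : e ≤ Real.sqrt (|a| - 1 + δ * |a|) := by
    apply Real.sqrt_le_sqrt; nlinarith
  have hd : e * g ≤ Real.sqrt (a ^ 2 - 1 + δ * a ^ 2) := by
    rw [hedef, hgdef, ← Real.sqrt_mul hA1.le]
    apply Real.sqrt_le_sqrt
    have : (|a| - 1) * (|a| + 1) = a ^ 2 - 1 := by rw [← sq_abs a]; ring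
    nlinarith [sq_abs a, sq_nonneg a]
  have hR : e * (|b| + g) ≤ R := by
    have h1 : |b| * e ≤ |b| * Real.sqrt (|a| - 1 + δ * |a|) :=
      mul_le_mul_of_nonneg_left hc hB0
    rw [hRdef]; nlinarith
  have he0' : 0 < e := by nlinarith
  have hg1 : 1 ≤ g := by nlinarith
  have hR0 : 0 < R := by nlinarith
  have key : ∀ k : ℕ, |(orbit a b (x₀, y₀) k).1| ≤ |a| ^ 2 * R ∧
      (|(orbit a b (x₀, y₀) k).1| ≤ |a| * R ∨
       |(orbit a b (x₀, y₀) k).1| ≤ R * (1 + ((orbit a b (x₀, y₀) k).2) ^ 2)) := by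
    intro k
    induction k with
    | zero =>
      refine ⟨?_, Or.inl ?_⟩
      · show |x₀| ≤ |a| ^ 2 * R
        nlinarith [sq_nonneg (|a| - 1)]
      · show |x₀| ≤ |a| * R
        nlinarith
    | succ k ih =>
      obtain ⟨ih1, ih2⟩ := ih
      have h1 : (orbit a b (x₀, y₀) (k+1)).1
          = -a * (orbit a b (x₀, y₀) k).1 / (1 + ((orbit a b (x₀, y₀) k).2) ^ 2) := rfl
      have h2 : (orbit a b (x₀, y₀) (k+1)).2
          = (orbit a b (x₀, y₀) k).1 + b * (orbit a b (x₀, y₀) k).2 := rfl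
      set X := (orbit a b (x₀, y₀) k).1 with hX
      set Y := (orbit a b (x₀, y₀) k).2 with hY
      have hP0 : (0:ℝ) < 1 + Y ^ 2 := by positivity
      have hP1 : (1:ℝ) ≤ 1 + Y ^ 2 := by nlinarith [sq_nonneg Y]
      have habs : |(orbit a b (x₀, y₀) (k+1)).1| = |a| * |X| / (1 + Y ^ 2) := by
        rw [h1, abs_div, abs_mul, abs_neg, abs_of_pos hP0]
      have ht0 : 0 ≤ |X| := abs_nonneg X
      have hdiv : |X| ≤ R * (1 + Y ^ 2) → |a| * |X| / (1 + Y ^ 2) ≤ |a| * R := by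
        intro h
        rw [div_le_iff₀ hP0]
        nlinarith [mul_le_mul_of_nonneg_left h (abs_nonneg a)]
      constructor
      · rw [habs]
        rcases ih2 with h | h
        · have hd1 : |a| * |X| / (1 + Y ^ 2) ≤ |a| * |X| :=
            div_le_self (by positivity) hP1
          nlinarith [mul_le_mul_of_nonneg_left h (abs_nonneg a)]
        · have := hdiv h
          nlinarith [mul_nonneg (mul_nonneg hA1.le ha0.le) hR0.le]
      · by_cases hcase : |(orbit a b (x₀, y₀) (k+1)).1| ≤ |a| * R
        · exact Or.inl hcase
        · right
          rw [habs] at hcase ⊢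
          push_neg at hcase
          have htAR : |X| ≤ |a| * R := by
            by_contra hcon
            push_neg at hcon
            rcases ih2 with h | h
            · linarith
            · exact absurd (hdiv h) (not_le.2 hcase)
          have hRP : R * (1 + Y ^ 2) < |X| := by
            have h3 := (lt_div_iff₀ hP0).mp hcase
            nlinarith
          have hse : |Y| ≤ e := by
            have hPA : 1 + Y ^ 2 < |a| := by nlinarith
            nlinarith [abs_nonneg Y, sq_abs Y]
          have hs2 : |Y| ^ 2 = Y ^ 2 := sq_abs Y
          have hcore := coreIneq |a| |b| e g |Y| R |X| ha hB0 hB1 he0 he2 hg0 hg2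
            (abs_nonneg Y) hse hR (by rw [hs2]; linarith) htAR
          have htBs0 : 0 ≤ |X| - |b| * |Y| := by
            nlinarith [mul_le_mul_of_nonneg_left hse hB0, mul_nonneg he0 hg0,
              mul_le_mul_of_nonneg_left hP1 hR0.le]
          have hYnext : |X| - |b| * |Y| ≤ |X + b * Y| := by
            have h4 := abs_sub_abs_le_abs_sub X (-(b * Y))
            rw [abs_neg, sub_neg_eq_add, abs_mul] at h4
            exact h4
          have hsq : (|X| - |b| * |Y|) ^ 2 ≤ (X + b * Y) ^ 2 := by
            rw [← sq_abs (X + b * Y)]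
            exact pow_le_pow_left₀ htBs0 hYnext 2
          have hmono : R * (1 + |Y| ^ 2) * (1 + (|X| - |b| * |Y|) ^ 2)
              ≤ R * (1 + Y ^ 2) * (1 + (X + b * Y) ^ 2) := by
            rw [hs2]
            exact mul_le_mul_of_nonneg_left (by linarith) (by positivity)
          rw [h2, div_le_iff₀ hP0]
          nlinarith [hcore, hmono]
  intro m
  calc |(orbit a b (x₀, y₀) m).1| ≤ |a| ^ 2 * R := (key m).1
    _ = a ^ 2 * R := by rw [sq_abs]
end

section
/- Let |a| > 1, |b| < 1, 0 < δ < 1, R_x = |b| sqrt(|a| - 1 + δ|a|) + sqrt(a² - 1 + δ a²). If |x_0| ≤ R_x, then there exists N such that |y_n| ≤ (a² R_x + δ)/(1 - |b|) for all n > N. -/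
open Filter Topology

set_option maxHeartbeats 2000000 in
theorem stmt13 (a b δ : ℝ) (ha : 1 < |a|) (hb : |b| < 1)
    (hδ0 : 0 < δ) (hδ1 : δ < 1) (x₀ y₀ : ℝ)
    (hx : |x₀| ≤ |b| * Real.sqrt (|a| - 1 + δ * |a|) +
      Real.sqrt (a ^ 2 - 1 + δ * a ^ 2)) :
    ∃ N : ℕ, ∀ n > N, |(orbit a b (x₀, y₀) n).2| ≤
      (a ^ 2 * (|b| * Real.sqrt (|a| - 1 + δ * |a|) +
        Real.sqrt (a ^ 2 - 1 + δ * a ^ 2)) + δ) / (1 - |b|) := by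
  have ha0 : (0:ℝ) < |a| := lt_trans one_pos ha
  have hb0 : (0:ℝ) ≤ |b| := abs_nonneg b
  have ha2 : (1:ℝ) ≤ a ^ 2 := by nlinarith [sq_abs a]
  have hsqa : |a| * |a| = a ^ 2 := by rw [← abs_mul, ← sq, abs_sq]
  set s := Real.sqrt (|a| - 1 + δ * |a|) with hs_def
  set r := Real.sqrt (a ^ 2 - 1 + δ * a ^ 2) with hr_def
  have hs2 : s ^ 2 = |a| - 1 + δ * |a| := Real.sq_sqrt (by nlinarith)
  have hr2 : r ^ 2 = a ^ 2 - 1 + δ * a ^ 2 := Real.sq_sqrt (by nlinarith)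
  have hs0 : 0 ≤ s := Real.sqrt_nonneg _
  have hr0 : 0 ≤ r := Real.sqrt_nonneg _
  set R := |b| * s + r with hR_def
  have hR0 : 0 ≤ R := by positivity
  set P := orbit a b (x₀, y₀) with hP_def
  have hx1 : ∀ n, (P (n+1)).1 = -a * (P n).1 / (1 + (P n).2 ^ 2) := fun n => rfl
  have hy1 : ∀ n, (P (n+1)).2 = (P n).1 + b * (P n).2 := fun n => rfl
  have hden : ∀ n, (0:ℝ) < 1 + (P n).2 ^ 2 := fun n => by positivity
  have habs : ∀ n, |(P (n+1)).1| * (1 + (P n).2 ^ 2) = |a| * |(P n).1| := by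
    intro n
    rw [hx1, abs_div, abs_of_pos (hden n), div_mul_cancel₀ _ (ne_of_gt (hden n)),
      abs_mul, abs_neg]
  have hgrow : ∀ n, |(P (n+1)).1| ≤ |a| * |(P n).1| := by
    intro n
    have h1 := habs n
    nlinarith [abs_nonneg ((P (n+1)).1), sq_nonneg ((P n).2), hden n]
  -- invariant
  have inv : ∀ n, (|(P n).1| ≤ |a| * R) ∨
      (|(P n).1| ≤ a ^ 2 * R ∧ |(P (n+1)).1| ≤ |a| * R) := by
    intro n
    induction n with
    | zero =>
      left
      have : |(P 0).1| = |x₀| := rfl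
      rw [this]
      nlinarith
    | succ n ih =>
      rcases ih with h | ⟨_, h2⟩
      · by_cases hcase : |(P n).1| ≤ R
        · left
          calc |(P (n+1)).1| ≤ |a| * |(P n).1| := hgrow n
            _ ≤ |a| * R := by nlinarith
        · push_neg at hcase
          by_cases hy : s ≤ |(P n).2|
          · -- contraction in one step
            left
            have hyy : s ^ 2 ≤ (P n).2 ^ 2 := by
              rw [← sq_abs ((P n).2)]; exact pow_le_pow_left₀ hs0 hy 2
            have hden2 : |a| * (1 + δ) ≤ 1 + (P n).2 ^ 2 := by nlinarith
            have h1 := habs n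
            -- |x(n+1)| * |a| (1+δ) ≤ |a| |x n|
            have : |(P (n+1)).1| * (1 + δ) ≤ |(P n).1| := by
              nlinarith [abs_nonneg ((P (n+1)).1)]
            nlinarith [abs_nonneg ((P (n+1)).1)]
          · push_neg at hy
            right
            constructor
            · calc |(P (n+1)).1| ≤ |a| * |(P n).1| := hgrow n
                _ ≤ a ^ 2 * R := by nlinarith
            · -- |y (n+1)| ≥ r, so two-step contraction
              have hynext : r ≤ |(P (n+1)).2| := by
                rw [hy1]
                have h1 : |(P n).1| - |b * (P n).2| ≤ |(P n).1 + b * (P n).2| := by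
                  have := abs_sub_abs_le_abs_sub ((P n).1) (-(b * (P n).2))
                  simpa [sub_neg_eq_add] using this
                have h2 : |b * (P n).2| ≤ |b| * s := by
                  rw [abs_mul]; nlinarith
                nlinarith
              have hyy : r ^ 2 ≤ (P (n+1)).2 ^ 2 := by
                rw [← sq_abs ((P (n+1)).2)]; exact pow_le_pow_left₀ hr0 hynext 2
              have hden2 : a ^ 2 * (1 + δ) ≤ 1 + (P (n+1)).2 ^ 2 := by nlinarith
              have h1 := habs (n+1)
              have hg := hgrow n
              have ha2pos : (0:ℝ) < a ^ 2 := by linarith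
              have e1 : |(P (n+2)).1| * (a ^ 2 * (1 + δ)) ≤ |a| * |(P (n+1)).1| := by
                rw [← h1]
                exact mul_le_mul_of_nonneg_left hden2 (abs_nonneg _)
              have e2 : |a| * |(P (n+1)).1| ≤ a ^ 2 * |(P n).1| := by
                have := mul_le_mul_of_nonneg_left hg (le_of_lt ha0)
                nlinarith
              have e3 : a ^ 2 * |(P n).1| ≤ a ^ 2 * (|a| * R) := by nlinarith
              have e4 : |(P (n+2)).1| * (a ^ 2 * (1 + δ)) ≤ a ^ 2 * (|a| * R) :=
                le_trans e1 (le_trans e2 e3)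
              nlinarith [abs_nonneg ((P (n+2)).1), ha2pos,
                mul_nonneg (mul_nonneg (abs_nonneg ((P (n+2)).1)) (le_of_lt ha2pos))
                  (le_of_lt hδ0)]
      · left; exact h2
  have hXbound : ∀ n, |(P n).1| ≤ a ^ 2 * R := by
    intro n
    rcases inv n with h | ⟨h, _⟩
    · nlinarith [mul_nonneg (by nlinarith : (0:ℝ) ≤ a ^ 2 - |a|) hR0]
    · exact h
  -- y recurrence bound
  have hbpos : (0:ℝ) < 1 - |b| := by linarith
  have hyb : ∀ n, |(P n).2| ≤ |b| ^ n * |y₀| + a ^ 2 * R / (1 - |b|) := by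
    intro n
    induction n with
    | zero =>
      have : (P 0).2 = y₀ := rfl
      rw [this, pow_zero, one_mul]
      have : 0 ≤ a ^ 2 * R / (1 - |b|) := by positivity
      linarith
    | succ n ih =>
      have h1 : |(P (n+1)).2| ≤ |(P n).1| + |b| * |(P n).2| := by
        rw [hy1]
        calc |(P n).1 + b * (P n).2| ≤ |(P n).1| + |b * (P n).2| := abs_add_le _ _
          _ = |(P n).1| + |b| * |(P n).2| := by rw [abs_mul]
      have h2 := hXbound n
      have hT : a ^ 2 * R / (1 - |b|) * (1 - |b|) = a ^ 2 * R :=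
        div_mul_cancel₀ _ (ne_of_gt hbpos)
      have h3 : |b| * |(P n).2| ≤ |b| * (|b| ^ n * |y₀| + a ^ 2 * R / (1 - |b|)) := by
        nlinarith [abs_nonneg ((P n).2)]
      have : |b| ^ (n+1) * |y₀| = |b| * (|b| ^ n * |y₀|) := by ring
      nlinarith
  -- choose N
  have htend : Tendsto (fun n => |b| ^ n * |y₀|) atTop (𝓝 0) := by
    have h0 : Tendsto (fun n : ℕ => |b| ^ n) atTop (𝓝 0) :=
      tendsto_pow_atTop_nhds_zero_of_lt_one hb0 hb
    simpa using h0.mul_const |y₀|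
  have hev : ∀ᶠ n in atTop, |b| ^ n * |y₀| ≤ δ := by
    filter_upwards [htend.eventually (ge_mem_nhds hδ0)] with n hn
    exact hn
  obtain ⟨N, hN⟩ := eventually_atTop.mp hev
  refine ⟨N, fun n hn => ?_⟩
  have h1 := hyb n
  have h2 := hN n (le_of_lt hn)
  have hT : a ^ 2 * R / (1 - |b|) * (1 - |b|) = a ^ 2 * R :=
    div_mul_cancel₀ _ (ne_of_gt hbpos)
  rw [le_div_iff₀ hbpos]
  nlinarith [abs_nonneg ((P n).2), mul_nonneg (pow_nonneg hb0 n) (abs_nonneg y₀)]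
end

section
/- Let |a| > 1, |b| < 1, 0 < δ < 1, R_x = |b| sqrt(|a| - 1 + δ|a|) + sqrt(a² - 1 + δ a²). For every initial condition (x_0, y_0), there exists n such that for all k > n, |x_k| ≤ a² R_x and |y_k| ≤ (a² R_x + δ)/(1 - |b|); i.e., the set {(x,y) : |x| ≤ a² R_x, |y| ≤ (a² R_x + δ)/(1-|b|)} is an absorbing set for the map. -/
open Filter Topology

set_option maxHeartbeats 2000000

theorem absorbAux (a b δ : ℝ) (ha : 1 < |a|) (hb : |b| < 1)
    (hδ0 : 0 < δ) (x y : ℕ → ℝ)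
    (hx : ∀ k, x (k+1) = -a * x k / (1 + y k ^ 2))
    (hy : ∀ k, y (k+1) = x k + b * y k) :
    ∃ n : ℕ, ∀ k > n,
      |x k| ≤ a ^ 2 * (|b| * Real.sqrt (|a| - 1 + δ * |a|) +
          Real.sqrt (a ^ 2 - 1 + δ * a ^ 2)) ∧
      |y k| ≤ (a ^ 2 * (|b| * Real.sqrt (|a| - 1 + δ * |a|) +
          Real.sqrt (a ^ 2 - 1 + δ * a ^ 2)) + δ) / (1 - |b|) := by
  set r1 := Real.sqrt (|a| - 1 + δ * |a|) with hr1
  set r2 := Real.sqrt (a ^ 2 - 1 + δ * a ^ 2) with hr2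
  have ha0 : (0:ℝ) < |a| := by linarith
  have hb0 : (0:ℝ) ≤ |b| := abs_nonneg b
  have ha2 : 1 < a ^ 2 := by nlinarith [sq_abs a]
  have haa2 : |a| ≤ a ^ 2 := by nlinarith [sq_abs a]
  have hr1nn : 0 ≤ r1 := Real.sqrt_nonneg _
  have hr2nn : 0 ≤ r2 := Real.sqrt_nonneg _
  have hr1sq : r1 ^ 2 = |a| - 1 + δ * |a| := Real.sq_sqrt (by nlinarith)
  have hr2sq : r2 ^ 2 = a ^ 2 - 1 + δ * a ^ 2 := Real.sq_sqrt (by nlinarith)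
  have hr12 : r1 ≤ r2 := by
    rw [hr1, hr2]; apply Real.sqrt_le_sqrt; nlinarith
  have hr2pos : 0 < r2 := by
    nlinarith [hr2sq]
  set Rx := |b| * r1 + r2 with hRx
  have hRxpos : 0 < Rx := by positivity
  set s := Real.sqrt (1 + δ) with hs
  have hssq : s ^ 2 = 1 + δ := Real.sq_sqrt (by linarith)
  have hs1 : 1 < s := by nlinarith [Real.sqrt_nonneg (1+δ)]
  -- basic recurrence facts
  have ht0 : ∀ k, (0:ℝ) < 1 + y k ^ 2 := fun k => by positivity
  have hxabs : ∀ k, |x (k+1)| = |a| * |x k| / (1 + y k ^ 2) := by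
    intro k
    rw [hx k, abs_div, abs_of_pos (ht0 k), abs_mul, abs_neg]
  have ht1 : ∀ k, r1 ≤ |y k| → |a| * (1 + δ) ≤ 1 + y k ^ 2 := by
    intro k h
    have : r1 ^ 2 ≤ y k ^ 2 := by
      rw [← sq_abs (y k)]; exact pow_le_pow_left₀ hr1nn h 2
    nlinarith
  have ht2 : ∀ k, r2 ≤ |y k| → a ^ 2 * (1 + δ) ≤ 1 + y k ^ 2 := by
    intro k h
    have : r2 ^ 2 ≤ y k ^ 2 := by
      rw [← sq_abs (y k)]; exact pow_le_pow_left₀ hr2nn h 2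
    nlinarith
  -- generic contraction: if m ≤ 1 + y k ^2 then |x (k+1)| * m ≤ |a| * |x k|
  have hcon : ∀ k (m : ℝ), m ≤ 1 + y k ^ 2 → |x (k+1)| * m ≤ |a| * |x k| := by
    intro k m hm
    rw [hxabs k, div_mul_eq_mul_div, div_le_iff₀ (ht0 k)]
    have h1 : 0 ≤ |a| * |x k| := by positivity
    nlinarith [abs_nonneg (x (k+1))]
  have hstep : ∀ k, |x (k+1)| ≤ |a| * |x k| := by
    intro k
    have := hcon k 1 (by nlinarith [sq_nonneg (y k)])
    linarith
  -- push lemma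
  have hpush : ∀ k, Rx ≤ |x k| → |y k| ≤ r1 → r2 ≤ |y (k+1)| := by
    intro k hxk hyk
    have h1 : |x k| - |b * y k| ≤ |x k + b * y k| := by
      have := abs_sub_abs_le_abs_sub (x k) (-(b * y k))
      simpa [sub_neg_eq_add] using this
    have h2 : |b * y k| ≤ |b| * r1 := by
      rw [abs_mul]; exact mul_le_mul_of_nonneg_left hyk hb0
    rw [hy k]
    have := hxk
    simp only [hRx] at hxk
    linarith
  -- Lyapunov function
  set G := |a| * s with hG
  have hG1 : 1 ≤ G := by nlinarith
  set g : ℝ → ℝ := fun z => if |z| < r2 then G else 1 with hg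
  have hgl : ∀ z, 1 ≤ g z := by
    intro z; simp only [hg]; split_ifs with h; exacts [hG1, le_refl 1]
  have hgu : ∀ z, g z ≤ G := by
    intro z; simp only [hg]; split_ifs with h; exacts [le_refl G, hG1]
  set V : ℕ → ℝ := fun k => |x k| * g (y k) with hV
  have hVx : ∀ k, |x k| ≤ V k :=
    fun k => le_mul_of_one_le_right (abs_nonneg _) (hgl _)
  have hVstep : ∀ k, Rx < |x k| → V (k+1) * s ≤ V k := by
    intro k hxk
    have e1 : |x (k+1)| * g (y (k+1)) * s ≤ |x (k+1)| * G * s :=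
      mul_le_mul_of_nonneg_right
        (mul_le_mul_of_nonneg_left (hgu _) (abs_nonneg _)) (by positivity)
    have e2 : |x (k+1)| * G * s = |x (k+1)| * (|a| * s ^ 2) := by rw [hG]; ring
    rw [hssq] at e2
    by_cases h2 : |y k| < r2
    · have hg0 : g (y k) = G := if_pos h2
      by_cases h1 : |y k| < r1
      · -- case C : next y is large
        have hp : r2 ≤ |y (k+1)| := hpush k hxk.le h1.le
        have hg1 : g (y (k+1)) = 1 := if_neg (not_lt.mpr hp)
        have hc := hcon k 1 (by nlinarith [sq_nonneg (y k)])
        simp only [hV, hg1, hg0, mul_one]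
        -- |x (k+1)| * s ≤ |x k| * G
        rw [hG]
        have hs0 : (0:ℝ) < s := lt_trans one_pos hs1
        nlinarith [mul_le_mul_of_nonneg_right hc hs0.le]
      · -- case B : r1 ≤ |y k| < r2
        have hc := hcon k (|a| * (1 + δ)) (ht1 k (not_lt.mp h1))
        simp only [hV, hg0]
        have e4 : |a| * |x k| ≤ |x k| * G := by
          rw [hG]
          nlinarith [mul_nonneg (mul_nonneg ha0.le (abs_nonneg (x k)))
            (sub_nonneg.mpr hs1.le)]
        linarith
    · -- case A : |y k| large
      have hg0 : g (y k) = 1 := if_neg h2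
      have hc := hcon k (a ^ 2 * (1 + δ)) (ht2 k (not_lt.mp h2))
      simp only [hV, hg0, mul_one]
      have e3 : |x (k+1)| * (|a| * (1 + δ)) * a ^ 2 ≤ |x k| * a ^ 2 := by
        nlinarith [mul_le_mul_of_nonneg_right hc ha0.le, sq_abs a]
      have e5 : |x (k+1)| * (|a| * (1 + δ)) ≤ |x k| :=
        le_of_mul_le_mul_right (by linarith) (by positivity : (0:ℝ) < a ^ 2)
      linarith
  -- eventually |x| drops below Rx
  have hk0 : ∃ k0, |x k0| ≤ Rx := by
    by_contra hcon'
    push_neg at hcon'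
    have hdecay : ∀ k, V k * s ^ k ≤ V 0 := by
      intro k
      induction k with
      | zero => simp
      | succ m ih =>
        have h1 := hVstep m (hcon' m)
        have h2 : V (m+1) * s * s ^ m ≤ V m * s ^ m :=
          mul_le_mul_of_nonneg_right h1 (by positivity)
        calc V (m+1) * s ^ (m+1) = V (m+1) * s * s ^ m := by ring
          _ ≤ V m * s ^ m := h2
          _ ≤ V 0 := ih
    obtain ⟨n, hn⟩ := pow_unbounded_of_one_lt (V 0 / Rx) hs1
    have hsn : (0:ℝ) < s ^ n := by positivity
    have h1 : V 0 < Rx * s ^ n := by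
      rw [div_lt_iff₀ hRxpos] at hn; nlinarith
    have h2 : Rx * s ^ n < |x n| * s ^ n := by
      exact mul_lt_mul_of_pos_right (hcon' n) hsn
    have h3 : |x n| * s ^ n ≤ V n * s ^ n :=
      mul_le_mul_of_nonneg_right (hVx n) hsn.le
    linarith [hdecay n]
  obtain ⟨k0, hk0'⟩ := hk0
  set Xb := a ^ 2 * Rx with hXb
  have hXbRx : Rx ≤ |a| * Rx := by nlinarith
  have haRxXb : |a| * Rx ≤ Xb := by rw [hXb]; nlinarith
  have hinv : ∀ m, |x (k0 + m)| ≤ Xb ∧ (|x (k0 + m)| ≤ |a| * Rx ∨ r2 ≤ |y (k0 + m)|) := by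
    intro m
    induction m with
    | zero =>
      simp only [Nat.add_zero]
      exact ⟨le_trans hk0' (le_trans hXbRx haRxXb), Or.inl (le_trans hk0' hXbRx)⟩
    | succ m ih =>
      obtain ⟨ihX, ihD⟩ := ih
      rw [show k0 + (m+1) = (k0 + m) + 1 from rfl]
      set k := k0 + m with hk
      by_cases hxk : |x k| ≤ Rx
      · have h1 : |x (k+1)| ≤ |a| * Rx :=
          le_trans (hstep k) (mul_le_mul_of_nonneg_left hxk ha0.le)
        exact ⟨le_trans h1 haRxXb, Or.inl h1⟩
      push_neg at hxk
      by_cases hy2 : r2 ≤ |y k|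
      · have hc := hcon k (a ^ 2 * (1 + δ)) (ht2 k hy2)
        have h1 : |x (k+1)| ≤ |a| * Rx := by
          have h3 : |a| * |x k| ≤ |a| * Xb := mul_le_mul_of_nonneg_left ihX ha0.le
          have h2 : |x (k+1)| * (a ^ 2 * (1 + δ)) ≤ |a| * Rx * (a ^ 2 * (1 + δ)) := by
            rw [hXb] at h3
            have h4 : (0:ℝ) ≤ |a| * (a ^ 2 * Rx) * δ := by positivity
            nlinarith [h4]
          exact le_of_mul_le_mul_right h2 (by positivity)
        exact ⟨le_trans h1 haRxXb, Or.inl h1⟩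
      · have hxa : |x k| ≤ |a| * Rx := ihD.resolve_right hy2
        have hX1 : |x (k+1)| ≤ Xb := by
          calc |x (k+1)| ≤ |a| * |x k| := hstep k
            _ ≤ |a| * (|a| * Rx) := mul_le_mul_of_nonneg_left hxa ha0.le
            _ = Xb := by rw [hXb, ← sq_abs a]; ring
        by_cases hy1 : r1 ≤ |y k|
        · have hc := hcon k (|a| * (1 + δ)) (ht1 k hy1)
          have h1 : |x (k+1)| ≤ |x k| := by
            have h2 : |x (k+1)| * (|a| * (1 + δ)) ≤ |x k| * (|a| * (1 + δ)) := by
              nlinarith [mul_nonneg (mul_nonneg (abs_nonneg (x k)) ha0.le) hδ0.le]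
            exact le_of_mul_le_mul_right h2 (by positivity)
          exact ⟨hX1, Or.inl (le_trans h1 hxa)⟩
        · push_neg at hy1
          exact ⟨hX1, Or.inr (hpush k hxk.le hy1.le)⟩
  have hxbound : ∀ k, k0 ≤ k → |x k| ≤ Xb := by
    intro k hk
    obtain ⟨m, rfl⟩ := Nat.exists_eq_add_of_le hk
    exact (hinv m).1
  have h1b : (0:ℝ) < 1 - |b| := by linarith
  obtain ⟨L, hLm⟩ : ∃ L, L * (1 - |b|) = Xb :=
    ⟨Xb / (1 - |b|), div_mul_cancel₀ _ (ne_of_gt h1b)⟩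
  have hyrec : ∀ k, k0 ≤ k → |y (k+1)| ≤ Xb + |b| * |y k| := by
    intro k hk
    rw [hy k]
    calc |x k + b * y k| ≤ |x k| + |b * y k| := abs_add_le _ _
      _ ≤ Xb + |b| * |y k| := by rw [abs_mul]; linarith [hxbound k hk]
  have hykey : ∀ m, |y (k0 + m)| - L ≤ |b| ^ m * (|y k0| - L) := by
    intro m
    induction m with
    | zero => simp
    | succ m ih =>
      have h1 := hyrec (k0 + m) (Nat.le_add_right _ _)
      have h2 : |b| * (|y (k0+m)| - L) ≤ |b| * (|b| ^ m * (|y k0| - L)) :=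
        mul_le_mul_of_nonneg_left ih hb0
      calc |y (k0 + (m+1))| - L ≤ Xb + |b| * |y (k0+m)| - L := by
            rw [show k0 + (m+1) = (k0+m) + 1 from rfl]; linarith
        _ = |b| * (|y (k0+m)| - L) := by linear_combination -hLm
        _ ≤ |b| * (|b| ^ m * (|y k0| - L)) := h2
        _ = |b| ^ (m+1) * (|y k0| - L) := by ring
  have hD : (0:ℝ) < δ / (1 - |b|) := by positivity
  have htend : Tendsto (fun m : ℕ => |b| ^ m * (|y k0| - L)) atTop (𝓝 0) := by
    simpa using (tendsto_pow_atTop_nhds_zero_of_lt_one hb0 hb).mul_const (|y k0| - L)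
  obtain ⟨m0, hm0⟩ := eventually_atTop.mp (htend.eventually_lt_const hD)
  refine ⟨k0 + m0, fun k hk => ?_⟩
  have hk0k : k0 ≤ k := le_trans (Nat.le_add_right _ _) hk.le
  refine ⟨hxbound k hk0k, ?_⟩
  obtain ⟨m, rfl⟩ := Nat.exists_eq_add_of_le hk0k
  have hm : m0 ≤ m := by omega
  have h3 := hykey m
  have h2 := hm0 m hm
  have h4 : |y (k0 + m)| ≤ L + δ / (1 - |b|) := by linarith
  have hD2 : (δ / (1 - |b|)) * (1 - |b|) = δ := div_mul_cancel₀ _ (ne_of_gt h1b)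
  rw [le_div_iff₀ h1b]
  nlinarith [mul_le_mul_of_nonneg_right h4 h1b.le]

theorem stmt14 (a b δ : ℝ) (ha : 1 < |a|) (hb : |b| < 1)
    (hδ0 : 0 < δ) (hδ1 : δ < 1) (x₀ y₀ : ℝ) :
    ∃ n : ℕ, ∀ k > n,
      |(orbit a b (x₀, y₀) k).1| ≤
        a ^ 2 * (|b| * Real.sqrt (|a| - 1 + δ * |a|) +
          Real.sqrt (a ^ 2 - 1 + δ * a ^ 2)) ∧
      |(orbit a b (x₀, y₀) k).2| ≤
        (a ^ 2 * (|b| * Real.sqrt (|a| - 1 + δ * |a|) +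
          Real.sqrt (a ^ 2 - 1 + δ * a ^ 2)) + δ) / (1 - |b|) := by
  exact absorbAux a b δ ha hb hδ0
    (fun k => (orbit a b (x₀, y₀) k).1) (fun k => (orbit a b (x₀, y₀) k).2)
    (fun k => rfl) (fun k => rfl)
end

section
/- Let |a| > 1, |b| > 1, and δ with 1/|b| < δ < 1. If |y_0| ≥ sqrt(|a| - 1) and |x_0| ≤ |y_0|(|b| - δ⁻¹), then after one step of the map: |x_1| ≤ |x_0|, |y_1| ≥ δ⁻¹ |y_0|, and |x_1| ≤ |y_1|(|b| - δ⁻¹). -/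
theorem stmt15 (a b δ x₀ y₀ : ℝ) (ha : 1 < |a|) (hb : 1 < |b|)
    (hδ : 1 / |b| < δ) (hδ1 : δ < 1)
    (hy : |y₀| ≥ Real.sqrt (|a| - 1)) (hx : |x₀| ≤ |y₀| * (|b| - δ⁻¹)) :
    |(-a * x₀ / (1 + y₀ ^ 2))| ≤ |x₀| ∧
    |x₀ + b * y₀| ≥ δ⁻¹ * |y₀| ∧
    |(-a * x₀ / (1 + y₀ ^ 2))| ≤ |x₀ + b * y₀| * (|b| - δ⁻¹) := by
  have ha0 : (0:ℝ) ≤ |a| - 1 := by linarith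
  have hbpos : (0:ℝ) < |b| := by linarith
  have hδpos : 0 < δ := lt_trans (by positivity) hδ
  have hδinv : δ⁻¹ < |b| := by
    have := (one_div_lt hbpos hδpos).mp hδ
    rwa [one_div] at this
  have hδinv1 : 1 < δ⁻¹ := (one_lt_inv₀ hδpos).mpr hδ1
  have hy2 : |a| - 1 ≤ y₀ ^ 2 :=
    calc |a| - 1 = Real.sqrt (|a| - 1) ^ 2 := (Real.sq_sqrt ha0).symm
    _ ≤ |y₀| ^ 2 := by nlinarith [Real.sqrt_nonneg (|a| - 1)]
    _ = y₀ ^ 2 := sq_abs y₀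
  have hdenpos : (0:ℝ) < 1 + y₀ ^ 2 := by positivity
  have h1 : |(-a * x₀ / (1 + y₀ ^ 2))| ≤ |x₀| := by
    rw [abs_div, abs_mul, abs_neg, abs_of_pos hdenpos, div_le_iff₀ hdenpos]
    nlinarith [abs_nonneg x₀, abs_nonneg a]
  have htri : |b * y₀| ≤ |x₀ + b * y₀| + |x₀| := by
    have := abs_add_le (x₀ + b * y₀) (-x₀)
    simpa using this
  have hmul : |b * y₀| = |b| * |y₀| := abs_mul b y₀
  have h2 : |x₀ + b * y₀| ≥ δ⁻¹ * |y₀| := by nlinarith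
  refine ⟨h1, h2, ?_⟩
  have hy0 : |y₀| ≤ δ * |x₀ + b * y₀| := by
    have := mul_le_mul_of_nonneg_left h2 (le_of_lt hδpos)
    rw [← mul_assoc, mul_inv_cancel₀ (ne_of_gt hδpos), one_mul] at this
    linarith
  have hyn : 0 ≤ |x₀ + b * y₀| := abs_nonneg _
  nlinarith [abs_nonneg x₀]
end

section
/- If |a| > 1 and |b| > 1, then for any initial condition with |y_0| ≥ sqrt(|a| - 1) and y_0 ≠ 0 and |x_0| ≤ |y_0|(|b| - δ⁻¹) for some δ ∈ (1/|b|, 1), the orbit satisfies |y_k| ≥ δ^{-k} |y_0| for all k, hence |y_k| → ∞ as k → ∞. -/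
open Filter Topology

theorem stmt16 (a b δ : ℝ) (ha : 1 < |a|) (hb : 1 < |b|)
    (hδ : 1 / |b| < δ) (hδ1 : δ < 1) (x₀ y₀ : ℝ)
    (hy : |y₀| ≥ Real.sqrt (|a| - 1)) (hy0 : y₀ ≠ 0)
    (hx : |x₀| ≤ |y₀| * (|b| - δ⁻¹)) :
    (∀ k : ℕ, |(orbit a b (x₀, y₀) k).2| ≥ (δ⁻¹) ^ k * |y₀|) ∧
    Tendsto (fun k => |(orbit a b (x₀, y₀) k).2|) atTop atTop := by
  have hb0 : (0:ℝ) < |b| := lt_trans one_pos hb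
  have hδpos : 0 < δ := lt_trans (by positivity) hδ
  have hinv1 : 1 < δ⁻¹ := by
    rw [lt_inv_comm₀ one_pos hδpos]; simpa using hδ1
  have hinvb : δ⁻¹ < |b| := by
    rw [inv_lt_comm₀ hδpos hb0] at *
    linarith [hδ, (one_div |b|).symm]
  have hy0pos : 0 < |y₀| := abs_pos.mpr hy0
  have ha1 : (0:ℝ) ≤ |a| - 1 := by linarith
  have key : ∀ k : ℕ,
      (δ⁻¹) ^ k * |y₀| ≤ |(orbit a b (x₀, y₀) k).2| ∧
      |(orbit a b (x₀, y₀) k).1| ≤ |(orbit a b (x₀, y₀) k).2| * (|b| - δ⁻¹) := by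
    intro k
    induction k with
    | zero => simpa [orbit] using hx
    | succ k ih =>
      obtain ⟨ihy, ihx⟩ := ih
      set x := (orbit a b (x₀, y₀) k).1 with hxdef
      set y := (orbit a b (x₀, y₀) k).2 with hydef
      have horb : orbit a b (x₀, y₀) (k + 1)
          = (-a * x / (1 + y ^ 2), x + b * y) := by
        rw [orbit]
      have hpow1 : (1:ℝ) ≤ (δ⁻¹) ^ k := one_le_pow₀ (le_of_lt hinv1)
      have hyk0 : |y₀| ≤ |y| := le_trans (by nlinarith) ihy
      have hyks : Real.sqrt (|a| - 1) ≤ |y| := le_trans hy hyk0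
      have hsq : (Real.sqrt (|a| - 1)) ^ 2 ≤ |y| ^ 2 :=
        pow_le_pow_left₀ (Real.sqrt_nonneg _) hyks 2
      rw [Real.sq_sqrt ha1] at hsq
      have hyk2 : |a| ≤ 1 + y ^ 2 := by
        have := sq_abs y; nlinarith
      -- lower bound on |y_{k+1}|
      have habs : |b * y| - |x| ≤ |x + b * y| := by
        have h1 : |b * y| = |(x + b * y) + -x| := by congr 1; ring
        have h2 := abs_add_le (x + b * y) (-x)
        rw [abs_neg] at h2
        linarith [h1 ▸ h2]
      have hystep : δ⁻¹ * |y| ≤ |x + b * y| := by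
        rw [abs_mul] at habs
        nlinarith
      constructor
      · rw [horb]
        simp only [pow_succ]
        calc (δ⁻¹) ^ k * δ⁻¹ * |y₀| = δ⁻¹ * ((δ⁻¹) ^ k * |y₀|) := by ring
          _ ≤ δ⁻¹ * |y| := by
              exact mul_le_mul_of_nonneg_left ihy (by positivity)
          _ ≤ |x + b * y| := hystep
      · rw [horb]
        simp only
        have hd : (0:ℝ) < 1 + y ^ 2 := by positivity
        rw [abs_div, abs_of_pos hd, abs_mul, abs_neg]
        have h1 : |a| * |x| / (1 + y ^ 2) ≤ |x| := by
          rw [div_le_iff₀ hd]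
          nlinarith [abs_nonneg x]
        have hyy : |y| ≤ |x + b * y| := by nlinarith [abs_nonneg y, hystep]
        calc |a| * |x| / (1 + y ^ 2) ≤ |x| := h1
          _ ≤ |y| * (|b| - δ⁻¹) := ihx
          _ ≤ |x + b * y| * (|b| - δ⁻¹) := mul_le_mul_of_nonneg_right hyy (by linarith)
  refine ⟨fun k => (key k).1, ?_⟩
  have htend : Tendsto (fun k : ℕ => (δ⁻¹) ^ k * |y₀|) atTop atTop :=
    (tendsto_pow_atTop_atTop_of_one_lt hinv1).atTop_mul_const hy0pos
  exact tendsto_atTop_mono (fun k => (key k).1) htend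
end
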